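/- Let n, k, m, r be integers with n ≥ 1, 2 ≤ k, 1 ≤ r ≤ ⌊k/2⌋, and m odd. Define rational numbers c̃_{m,0} = 1 and c̃_{m,s} = 1/((k+m/2)(k+m/2−1)⋯(k+m/2−s+1)·s!) for s ≥ 1 (the denominators are nonzero since m is odd). Then Σ_{s=0}^{r} c̃_{m,s} · (r!/(r−s)!) · (n−k+r+1)(n−k+r+2)⋯(n−k+r+s) = ((m/2+n+r+1)(m/2+n+r)⋯(m/2+n+2)) / ((m/2+k)(m/2+k−1)⋯(m/2+k−r+1)), as an identity of rational numbers. -/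

import Mathlib

/-!
Write `x^(s)` and `x_(s)` for the falling and rising factorials and `K = k + m/2`. The
denominators are `K^(s)`, and `K^(r) = K^(s) · (K - r + 1)_(r - s)`, so multiplying through by
`K^(r)` turns the sum into the Chu–Vandermonde convolution of rising factorials at
`n - k + r + 1` and `K - r + 1`, whose sum is `m/2 + n + 2`. Since `m` is odd, no `K - t` vanishes.
-/

open Polynomial Finset

theorem ascPochhammer_eval_eq_prod_range {R : Type*} [CommSemiring R] (n : ℕ) (r : R) :
    (ascPochhammer R n).eval r = ∏ j ∈ range n, (r + j) := by
  induction n with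
  | zero => simp
  | succ n ih => simp [ascPochhammer_succ_right, ih, ← prod_range_succ]

theorem descPochhammer_smeval_intCast_eq_eval {R : Type*} [CommRing R] (n : ℕ) (r : R) :
    (descPochhammer ℤ n).smeval r = (descPochhammer R n).eval r := by
  rw [← aeval_eq_smeval, aeval_def, eval₂_eq_eval_map, descPochhammer_map]

/-- Rising-factorial Chu–Vandermonde, obtained from the falling one by `x ↦ -x`. -/
theorem ascPochhammer_eval_add {R : Type*} [CommRing R] (x y : R) (k : ℕ) :
    (ascPochhammer R k).eval (x + y) = ∑ ij ∈ antidiagonal k,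
      k.choose ij.1 * ((ascPochhammer R ij.1).eval x * (ascPochhammer R ij.2).eval y) := by
  have vandermonde := Ring.descPochhammer_smeval_add k (Commute.all (-x) (-y))
  simp only [descPochhammer_smeval_intCast_eq_eval] at vandermonde
  rw [← neg_neg (x + y), ascPochhammer_eval_neg_eq_descPochhammer, neg_add, vandermonde, mul_sum]
  refine sum_congr rfl fun ij hij => ?_
  rw [← neg_neg x, ← neg_neg y, ascPochhammer_eval_neg_eq_descPochhammer,
    ascPochhammer_eval_neg_eq_descPochhammer, neg_neg, neg_neg, ← mem_antidiagonal.mp hij, pow_add]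
  ring

theorem descPochhammer_eval_eq_mul_ascPochhammer_eval {R : Type*} [CommRing R] (x : R)
    {r s : ℕ} (hs : s ≤ r) :
    (descPochhammer R r).eval x =
      (descPochhammer R s).eval x * (ascPochhammer R (r - s)).eval (x - r + 1) := by
  obtain ⟨d, rfl⟩ := Nat.exists_eq_add_of_le hs
  rw [← descPochhammer_mul, eval_mul, eval_comp, Nat.add_sub_cancel_left, eval_sub, eval_X,
    eval_natCast, descPochhammer_eval_eq_ascPochhammer R (x - s) d, Nat.cast_add, sub_sub]

theorem sum_choose_mul_ascPochhammer_div_descPochhammer {F : Type*} [Field F] (a x : F) (r : ℕ)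
    (hx : (descPochhammer F r).eval x ≠ 0) :
    ∑ s ∈ range (r + 1),
        r.choose s * (ascPochhammer F s).eval a / (descPochhammer F s).eval x =
      (ascPochhammer F r).eval (a + (x - r + 1)) / (descPochhammer F r).eval x := by
  rw [eq_div_iff hx, sum_mul, ascPochhammer_eval_add, Nat.sum_antidiagonal_eq_sum_range_succ_mk]
  refine sum_congr rfl fun s hs => ?_
  rw [descPochhammer_eval_eq_mul_ascPochhammer_eval x (Nat.lt_succ_iff.mp (mem_range.mp hs))]
    at hx ⊢
  have hxs : (descPochhammer F s).eval x ≠ 0 := left_ne_zero_of_mul hx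
  field_simp

theorem intCast_add_odd_div_two_ne_zero {a m : ℤ} (hm : Odd m) : (a : ℚ) + m / 2 ≠ 0 := by
  intro h
  have : m = -2 * a := by exact_mod_cast (by linarith : (m : ℚ) = -2 * a)
  rcases hm with ⟨l, rfl⟩
  omega

theorem descPochhammer_eval_intCast_add_odd_div_two_ne_zero {a m : ℤ} (hm : Odd m) (r : ℕ) :
    (descPochhammer ℚ r).eval ((a : ℚ) + m / 2) ≠ 0 := by
  rw [descPochhammer_eval_eq_prod_range, prod_ne_zero_iff]
  intro t _
  convert intCast_add_odd_div_two_ne_zero (a := a - t) hm using 1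
  push_cast
  ring

theorem sum_c_tilde_eq_ratio_general (n k m : ℤ) (r : ℕ)
    (hodd : Odd m)
    (c : ℕ → ℚ) (hc0 : c 0 = 1)
    (hc : ∀ s : ℕ, 1 ≤ s →
      c s = 1 / ((∏ t ∈ Finset.range s, ((k : ℚ) + (m : ℚ) / 2 - (t : ℚ))) *
        (s.factorial : ℚ))) :
    ∑ s ∈ Finset.range (r + 1),
        c s * ((r.factorial : ℚ) / ((r - s).factorial : ℚ)) *
          ∏ j ∈ Finset.range s, ((n : ℚ) - (k : ℚ) + (r : ℚ) + 1 + (j : ℚ)) =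
      (∏ j ∈ Finset.range r, ((m : ℚ) / 2 + (n : ℚ) + 2 + (j : ℚ))) /
        ∏ t ∈ Finset.range r, ((m : ℚ) / 2 + (k : ℚ) - (t : ℚ)) := by
  simp only [add_comm ((m : ℚ) / 2) (k : ℚ), ← descPochhammer_eval_eq_prod_range,
    ← ascPochhammer_eval_eq_prod_range] at hc ⊢
  have hc' : ∀ s, c s = 1 / ((descPochhammer ℚ s).eval ((k : ℚ) + m / 2) * s.factorial) := by
    rintro (_ | s)
    · simp [hc0]
    · exact hc _ s.succ_pos
  have hterm : ∀ s ∈ range (r + 1),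
      c s * ((r.factorial : ℚ) / (r - s).factorial) *
          (ascPochhammer ℚ s).eval ((n : ℚ) - k + r + 1) =
        r.choose s * (ascPochhammer ℚ s).eval ((n : ℚ) - k + r + 1) /
          (descPochhammer ℚ s).eval ((k : ℚ) + m / 2) := by
    intro s hs
    rw [hc', Nat.cast_choose ℚ (Nat.lt_succ_iff.mp (mem_range.mp hs))]
    field_simp
  rw [sum_congr rfl hterm, sum_choose_mul_ascPochhammer_div_descPochhammer _ _ _
    (descPochhammer_eval_intCast_add_odd_div_two_ne_zero hodd r)]
  congr 2
  ring

theorem sum_c_tilde_eq_ratio (n k m : ℤ) (r : ℕ)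
    (hn : 1 ≤ n) (hk : 2 ≤ k) (hr : 1 ≤ r) (hrk : (r : ℤ) ≤ k / 2)
    (hodd : Odd m)
    (c : ℕ → ℚ) (hc0 : c 0 = 1)
    (hc : ∀ s : ℕ, 1 ≤ s →
      c s = 1 / ((∏ t ∈ Finset.range s, ((k : ℚ) + (m : ℚ) / 2 - (t : ℚ))) *
        (s.factorial : ℚ))) :
    ∑ s ∈ Finset.range (r + 1),
        c s * ((r.factorial : ℚ) / ((r - s).factorial : ℚ)) *
          ∏ j ∈ Finset.range s, ((n : ℚ) - (k : ℚ) + (r : ℚ) + 1 + (j : ℚ)) =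
      (∏ j ∈ Finset.range r, ((m : ℚ) / 2 + (n : ℚ) + 2 + (j : ℚ))) /
        ∏ t ∈ Finset.range r, ((m : ℚ) / 2 + (k : ℚ) - (t : ℚ)) :=
  sum_c_tilde_eq_ratio_general n k m r hodd c hc0 hc
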